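/- Let X be a real N × m matrix of full column rank, y ∈ ℝ^N, c ∈ ℝ^m nonzero, c0 ∈ ℝ. Let α̂ = (XᵀX)⁻¹Xᵀy and y0² = ‖y − Xα̂‖². If c0 + cᵀα̂ = 0 and y0² = 0, then g(α) = ‖y − Xα‖²/(c0 + cᵀα)² achieves its minimum on {α : c0 + cᵀα ≠ 0}, and the set of minimizers is exactly {α̂ + λ(XᵀX)⁻¹c : λ ∈ ℝ, λ ≠ 0}; in particular the minimizer is not unique. -/

import Mathlib

/-! Since `y0² = 0` we have `y = X α̂`, so with `A = XᵀX` and `β = α - α̂` the objective is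
`g α = βᵀAβ / (cᵀβ)²`, the denominator vanishing at `α̂`. Cauchy–Schwarz for the inner product
given by `A`, applied to `cᵀβ = (A⁻¹c)ᵀAβ`, gives `(cᵀβ)² ≤ (cᵀA⁻¹c)(βᵀAβ)`; hence
`g ≥ 1 / cᵀA⁻¹c`, with equality exactly when `β` is a nonzero multiple of `A⁻¹c`. -/

open Matrix

namespace Matrix

theorem mulVec_injective_of_rank_eq_card {K m n : Type*} [Field K] [Fintype n]
    (A : Matrix m n K) (hA : A.rank = Fintype.card n) : Function.Injective A.mulVec := by
  have h := LinearMap.finrank_range_add_finrank_ker A.mulVecLin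
  rw [← rank, hA, Module.finrank_fintype_fun_eq_card] at h
  have hker : Module.finrank K (LinearMap.ker A.mulVecLin) = 0 := by omega
  exact LinearMap.ker_eq_bot.mp (Submodule.finrank_eq_zero.mp hker)

theorem sum_sq_mulVec_sub_mulVec {R m n : Type*} [CommRing R] [Fintype m] [Fintype n]
    (X : Matrix m n R) (a α : n → R) :
    ∑ i, ((X *ᵥ a) i - (X *ᵥ α) i) ^ 2 = (α - a) ⬝ᵥ (Xᵀ * X) *ᵥ (α - a) := by
  rw [← mulVec_mulVec, dotProduct_mulVec, vecMul_transpose, dotProduct, ← neg_sub a α]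
  simp only [mulVec_neg, mulVec_sub, Pi.neg_apply, Pi.sub_apply, neg_mul_neg, sq]

section Field

variable {K n : Type*} [Field K] [Fintype n] {A : Matrix n n K} {c d : n → K}

/-- Pythagoras: `w` is the component of `β` that is `A`-orthogonal to `d`. -/
theorem dotProduct_mulVec_eq_sq_div_add (hA : A.IsSymm) (hd : A *ᵥ d = c)
    (ht : c ⬝ᵥ d ≠ 0) (β : n → K) :
    let w := β - (c ⬝ᵥ β / c ⬝ᵥ d) • d
    β ⬝ᵥ A *ᵥ β = (c ⬝ᵥ β) ^ 2 / c ⬝ᵥ d + w ⬝ᵥ A *ᵥ w := by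
  intro w
  have hdA : d ⬝ᵥ A *ᵥ β = c ⬝ᵥ β := by
    rw [dotProduct_mulVec, ← mulVec_transpose, hA.eq, hd]
  simp only [w, mulVec_sub, mulVec_smul, sub_dotProduct, dotProduct_sub, smul_dotProduct,
    dotProduct_smul, hdA, hd, dotProduct_comm d c, dotProduct_comm β c, smul_eq_mul]
  field_simp
  ring

end Field

section PosDef

variable {n : Type*} [Fintype n] {A : Matrix n n ℝ}

theorem PosDef.dotProduct_mulVec_eq_zero_iff (hA : A.PosDef) {w : n → ℝ} :
    w ⬝ᵥ A *ᵥ w = 0 ↔ w = 0 := by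
  refine ⟨fun h => ?_, fun h => by simp [h]⟩
  by_contra hw
  exact (hA.dotProduct_mulVec_pos hw).ne' (by simpa using h)

variable [DecidableEq n]

theorem PosDef.dotProduct_inv_mulVec_pos (hA : A.PosDef) {c : n → ℝ} (hc : c ≠ 0) :
    0 < c ⬝ᵥ A⁻¹ *ᵥ c := by
  simpa using hA.inv.dotProduct_mulVec_pos hc

theorem PosDef.mul_dotProduct_mulVec_eq (hA : A.PosDef) {c : n → ℝ} (hc : c ≠ 0) (β : n → ℝ) :
    let w := β - (c ⬝ᵥ β / c ⬝ᵥ A⁻¹ *ᵥ c) • A⁻¹ *ᵥ c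
    c ⬝ᵥ A⁻¹ *ᵥ c * (β ⬝ᵥ A *ᵥ β) = (c ⬝ᵥ β) ^ 2 + c ⬝ᵥ A⁻¹ *ᵥ c * (w ⬝ᵥ A *ᵥ w) := by
  have ht := hA.dotProduct_inv_mulVec_pos hc
  have hd : A *ᵥ A⁻¹ *ᵥ c = c := by
    rw [mulVec_mulVec, mul_nonsing_inv _ hA.det_pos.ne'.isUnit, one_mulVec]
  have hsymm : A.IsSymm := isHermitian_iff_isSymm.mp hA.isHermitian
  rw [dotProduct_mulVec_eq_sq_div_add hsymm hd ht.ne' β]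
  field_simp

theorem PosDef.sq_dotProduct_le (hA : A.PosDef) (c β : n → ℝ) :
    (c ⬝ᵥ β) ^ 2 ≤ c ⬝ᵥ A⁻¹ *ᵥ c * (β ⬝ᵥ A *ᵥ β) := by
  rcases eq_or_ne c 0 with rfl | hc
  · simp
  rw [hA.mul_dotProduct_mulVec_eq hc β]
  have ht := hA.dotProduct_inv_mulVec_pos hc
  have hw := hA.posSemidef.dotProduct_mulVec_nonneg (β - (c ⬝ᵥ β / c ⬝ᵥ A⁻¹ *ᵥ c) • A⁻¹ *ᵥ c)
  simp only [star_trivial] at hw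
  nlinarith

theorem PosDef.sq_dotProduct_eq_iff (hA : A.PosDef) {c : n → ℝ} (hc : c ≠ 0) (β : n → ℝ) :
    (c ⬝ᵥ β) ^ 2 = c ⬝ᵥ A⁻¹ *ᵥ c * (β ⬝ᵥ A *ᵥ β) ↔ ∃ l : ℝ, β = l • A⁻¹ *ᵥ c := by
  have ht := hA.dotProduct_inv_mulVec_pos hc
  rw [hA.mul_dotProduct_mulVec_eq hc β, left_eq_add, mul_eq_zero, or_iff_right ht.ne',
    hA.dotProduct_mulVec_eq_zero_iff, sub_eq_zero]
  refine ⟨fun h => ⟨_, h⟩, ?_⟩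
  rintro ⟨l, rfl⟩
  rw [dotProduct_smul, smul_eq_mul, mul_div_cancel_right₀ _ ht.ne']

theorem PosDef.one_div_le_div_sq_iff (hA : A.PosDef) {c β : n → ℝ} (hc : c ≠ 0)
    (hβ : c ⬝ᵥ β ≠ 0) :
    β ⬝ᵥ A *ᵥ β / (c ⬝ᵥ β) ^ 2 ≤ 1 / c ⬝ᵥ A⁻¹ *ᵥ c ↔ ∃ l : ℝ, β = l • A⁻¹ *ᵥ c := by
  rw [div_le_div_iff₀ (by positivity) (hA.dotProduct_inv_mulVec_pos hc), one_mul,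
    ← hA.sq_dotProduct_eq_iff hc, mul_comm]
  exact ⟨fun h => le_antisymm (hA.sq_dotProduct_le c β) h, ge_of_eq⟩

theorem PosDef.setOf_isMinOn_div_sq_eq (hA : A.PosDef) {c : n → ℝ} (hc : c ≠ 0) {c0 : ℝ}
    {a : n → ℝ} (ha : c0 + c ⬝ᵥ a = 0) :
    {α | c0 + c ⬝ᵥ α ≠ 0 ∧ IsMinOn (fun α => (α - a) ⬝ᵥ A *ᵥ (α - a) / (c0 + c ⬝ᵥ α) ^ 2)
        {α | c0 + c ⬝ᵥ α ≠ 0} α} =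
      {α | ∃ l : ℝ, l ≠ 0 ∧ α = a + l • A⁻¹ *ᵥ c} := by
  set f := fun α => (α - a) ⬝ᵥ A *ᵥ (α - a) / (c0 + c ⬝ᵥ α) ^ 2
  set t := c ⬝ᵥ A⁻¹ *ᵥ c
  have ht : 0 < t := hA.dotProduct_inv_mulVec_pos hc
  have hden : ∀ α, c0 + c ⬝ᵥ α = c ⬝ᵥ (α - a) := fun α => by rw [dotProduct_sub]; linarith
  have hle_iff : ∀ α, c0 + c ⬝ᵥ α ≠ 0 → (f α ≤ 1 / t ↔ ∃ l : ℝ, α - a = l • A⁻¹ *ᵥ c) :=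
    fun α hα => by
      rw [hden] at hα
      simp only [f, hden]
      exact hA.one_div_le_div_sq_iff hc hα
  have hlower : ∀ α, c0 + c ⬝ᵥ α ≠ 0 → 1 / t ≤ f α := fun α hα => by
    rw [hden] at hα
    simp only [f, hden]
    rw [div_le_div_iff₀ ht (by positivity), one_mul, mul_comm]
    exact hA.sq_dotProduct_le c _
  have hray : ∀ l : ℝ, c0 + c ⬝ᵥ (a + l • A⁻¹ *ᵥ c) = l * t := fun l => by
    rw [dotProduct_add, dotProduct_smul, smul_eq_mul]; linarith
  ext α
  simp only [Set.mem_ofPred_eq, isMinOn_iff]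
  constructor
  · rintro ⟨hα, hmin⟩
    have hone : c0 + c ⬝ᵥ (a + (1 : ℝ) • A⁻¹ *ᵥ c) ≠ 0 := by rw [hray]; simpa using ht.ne'
    have hone_le : f (a + (1 : ℝ) • A⁻¹ *ᵥ c) ≤ 1 / t := (hle_iff _ hone).mpr ⟨1, by abel⟩
    obtain ⟨l, hl⟩ := (hle_iff α hα).mp ((hmin _ hone).trans hone_le)
    refine ⟨l, fun hl0 => hα ?_, by rw [← hl]; abel⟩
    rw [hden, hl, hl0, zero_smul, dotProduct_zero]
  · rintro ⟨l, hl, rfl⟩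
    have hα : c0 + c ⬝ᵥ (a + l • A⁻¹ *ᵥ c) ≠ 0 := by rw [hray]; exact mul_ne_zero hl ht.ne'
    exact ⟨hα, fun α' hα' => ((hle_iff _ hα).mpr ⟨l, by abel⟩).trans (hlower α' hα')⟩

end PosDef

end Matrix

theorem stmt_5_general (N m : ℕ) (X : Matrix (Fin N) (Fin m) ℝ)
    (hX : X.rank = m) (y : Fin N → ℝ) (c : Fin m → ℝ) (hc : c ≠ 0) (c0 : ℝ) :
    let αhat : Fin m → ℝ := ((Xᵀ * X)⁻¹).mulVec (Xᵀ.mulVec y)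
    let y0sq : ℝ := ∑ i, (y i - X.mulVec αhat i) ^ 2
    let g : (Fin m → ℝ) → ℝ :=
      fun α => (∑ i, (y i - X.mulVec α i) ^ 2) / (c0 + c ⬝ᵥ α) ^ 2
    c0 + c ⬝ᵥ αhat = 0 → y0sq = 0 →
      {α : Fin m → ℝ | c0 + c ⬝ᵥ α ≠ 0 ∧
          ∀ α' : Fin m → ℝ, c0 + c ⬝ᵥ α' ≠ 0 → g α ≤ g α'} =
        {α : Fin m → ℝ | ∃ l : ℝ, l ≠ 0 ∧ α = αhat + l • ((Xᵀ * X)⁻¹).mulVec c} := by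
  intro αhat y0sq g hαhat hy0
  have hA : (Xᵀ * X).PosDef := by
    simpa [conjTranspose_eq_transpose_of_trivial] using
      PosDef.conjTranspose_mul_self X (X.mulVec_injective_of_rank_eq_card (by simpa using hX))
  have hy : y = X *ᵥ αhat := by
    funext i
    have hi := (Finset.sum_eq_zero_iff_of_nonneg fun j _ => sq_nonneg _).mp hy0 i (Finset.mem_univ i)
    exact sub_eq_zero.mp (pow_eq_zero_iff two_ne_zero |>.mp hi)
  have hg : g = fun α => (α - αhat) ⬝ᵥ (Xᵀ * X) *ᵥ (α - αhat) / (c0 + c ⬝ᵥ α) ^ 2 := by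
    funext α
    simp only [g, hy, sum_sq_mulVec_sub_mulVec]
  simpa only [hg, isMinOn_iff, Set.mem_ofPred_eq] using hA.setOf_isMinOn_div_sq_eq hc hαhat

theorem stmt_5 (N m : ℕ) (hm : m ≤ N) (X : Matrix (Fin N) (Fin m) ℝ)
    (hX : X.rank = m) (y : Fin N → ℝ) (c : Fin m → ℝ) (hc : c ≠ 0) (c0 : ℝ) :
    let αhat : Fin m → ℝ := ((Xᵀ * X)⁻¹).mulVec (Xᵀ.mulVec y)
    let y0sq : ℝ := ∑ i, (y i - X.mulVec αhat i) ^ 2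
    let g : (Fin m → ℝ) → ℝ :=
      fun α => (∑ i, (y i - X.mulVec α i) ^ 2) / (c0 + c ⬝ᵥ α) ^ 2
    c0 + c ⬝ᵥ αhat = 0 → y0sq = 0 →
      {α : Fin m → ℝ | c0 + c ⬝ᵥ α ≠ 0 ∧
          ∀ α' : Fin m → ℝ, c0 + c ⬝ᵥ α' ≠ 0 → g α ≤ g α'} =
        {α : Fin m → ℝ | ∃ l : ℝ, l ≠ 0 ∧ α = αhat + l • ((Xᵀ * X)⁻¹).mulVec c} :=
  stmt_5_general N m X hX y c hc c0
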